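/- Let N ≥ 1, 0 < s < 1, let Ω ⊆ ℝ^N be a measurable set with Lebesgue measure, and let 0 < θ₂ < θ₃ < π/2. Let T : Σ(π/2) → ℒ(L²(Ω;ℂ)) satisfy the semigroup law T(z₁+z₂) = T(z₁)∘T(z₂) for all z₁, z₂ ∈ Σ(π/2). Assume there is a constant C > 0 such that: (i) ‖T(z)‖_{ℒ(L²(Ω))} ≤ C for all z ∈ Σ(θ₃); (ii) for every real t > 0 and every f ∈ L¹(Ω) ∩ L²(Ω), ‖T(t)f‖_{L²(Ω)} ≤ C t^{-N/(4s)} ‖f‖_{L¹(Ω)}; and (iii) for every real t > 0 and every f ∈ L²(Ω), T(t)f has an essentially bounded representative with ‖T(t)f‖_{L^∞(Ω)} ≤ C t^{-N/(4s)} ‖f‖_{L²(Ω)}. Then there is a constant C' > 0 such that for every z ∈ Σ(θ₂) and every f ∈ L¹(Ω) ∩ L²(Ω), T(z)f has an essentially bounded representative and ‖T(z)f‖_{L^∞(Ω)} ≤ C' (Re z)^{-N/(2s)} ‖f‖_{L¹(Ω)}. -/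

import Mathlib

/-!
Put `t = Re z` and `δ = tan θ₂ / tan θ₃ ∈ (0, 1)`. Then
`z = (1 - δ) t / 2 + (z - (1 - δ) t) + (1 - δ) t / 2`, and the middle term, with real part `δ t`
and imaginary part `Im z`, lies in `Σ(θ₃)`. By the semigroup law `T(z)` factors as an
`L¹ → L²` map, a uniformly `L²`-bounded map and an `L² → L^∞` map, each real factor costing
`C ((1 - δ) t / 2)^{-N/(4s)}`.
-/

open MeasureTheory Real

def sector (θ : ℝ) : Set ℂ := {z | z ≠ 0 ∧ |z.arg| < θ}

lemma tan_abs_of_abs_lt_pi_div_two {x : ℝ} (hx : |x| < π / 2) : tan |x| = |tan x| := by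
  have hsign : tan |x| = tan x ∨ tan |x| = -tan x := by
    rcases abs_choice x with h | h <;> simp [h, tan_neg]
  have hnonneg : 0 ≤ tan |x| := tan_nonneg_of_nonneg_of_le_pi_div_two (abs_nonneg x) hx.le
  rcases hsign with h | h
  · rw [h] at hnonneg ⊢; exact (abs_of_nonneg hnonneg).symm
  · rw [h] at hnonneg ⊢; rw [abs_of_nonpos (by linarith)]

lemma tan_abs_arg_of_re_pos {z : ℂ} (hz : 0 < z.re) : tan |z.arg| = |z.im| / z.re := by
  rw [tan_abs_of_abs_lt_pi_div_two (Complex.abs_arg_lt_pi_div_two_iff.2 (Or.inl hz)),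
    Complex.tan_arg, abs_div, abs_of_pos hz]

lemma abs_arg_lt_iff_of_re_pos {θ : ℝ} (hθ₀ : -(π / 2) < θ) (hθ : θ < π / 2) {z : ℂ}
    (hz : 0 < z.re) : |z.arg| < θ ↔ |z.im| < z.re * tan θ := by
  rw [← strictMonoOn_tan.lt_iff_lt
      ⟨by linarith [abs_nonneg z.arg], Complex.abs_arg_lt_pi_div_two_iff.2 (Or.inl hz)⟩ ⟨hθ₀, hθ⟩,
    tan_abs_arg_of_re_pos hz, div_lt_iff₀ hz, mul_comm]

lemma re_pos_of_mem_sector {θ : ℝ} (hθ : θ ≤ π / 2) {z : ℂ} (hz : z ∈ sector θ) : 0 < z.re :=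
  (Complex.abs_arg_lt_pi_div_two_iff.1 (hz.2.trans_le hθ)).resolve_right hz.1

lemma mem_sector_iff {θ : ℝ} (hθ₀ : -(π / 2) < θ) (hθ : θ < π / 2) {z : ℂ} :
    z ∈ sector θ ↔ 0 < z.re ∧ |z.im| < z.re * tan θ := by
  refine ⟨fun hz => ?_, fun ⟨hre, him⟩ =>
    ⟨Complex.ne_zero_of_re_pos hre, (abs_arg_lt_iff_of_re_pos hθ₀ hθ hre).2 him⟩⟩
  have hre := re_pos_of_mem_sector hθ.le hz
  exact ⟨hre, (abs_arg_lt_iff_of_re_pos hθ₀ hθ hre).1 hz.2⟩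

lemma mem_sector_pi_div_two {z : ℂ} (hz : 0 < z.re) : z ∈ sector (π / 2) :=
  ⟨Complex.ne_zero_of_re_pos hz, Complex.abs_arg_lt_pi_div_two_iff.2 (Or.inl hz)⟩

lemma sub_ofReal_mem_sector {θ₂ θ₃ : ℝ} (hθ₂ : 0 < θ₂) (hθ₂₃ : θ₂ < θ₃) (hθ₃ : θ₃ < π / 2)
    {z : ℂ} (hz : z ∈ sector θ₂) :
    z - ((1 - tan θ₂ / tan θ₃) * z.re : ℝ) ∈ sector θ₃ := by
  have hθ₂' : θ₂ < π / 2 := hθ₂₃.trans hθ₃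
  have htan₃ : 0 < tan θ₃ := tan_pos_of_pos_of_lt_pi_div_two (hθ₂.trans hθ₂₃) hθ₃
  obtain ⟨hre, him⟩ := (mem_sector_iff (by linarith [pi_pos]) hθ₂').1 hz
  rw [mem_sector_iff (by linarith [pi_pos]) hθ₃]
  have hδ : 0 < tan θ₂ / tan θ₃ := div_pos (tan_pos_of_pos_of_lt_pi_div_two hθ₂ hθ₂') htan₃
  simp only [Complex.sub_re, Complex.sub_im, Complex.ofReal_re, Complex.ofReal_im, sub_zero]
  constructor
  · linarith [mul_pos hδ hre]
  · calc |z.im| < z.re * tan θ₂ := him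
      _ = (z.re - (1 - tan θ₂ / tan θ₃) * z.re) * tan θ₃ := by field_simp; ring

lemma apply_add_add_eq {𝕜 E : Type*} [Semiring 𝕜] [TopologicalSpace E] [AddCommMonoid E]
    [Module 𝕜 E] (T : ℂ → E →L[𝕜] E)
    (hT : ∀ z₁ ∈ sector (π / 2), ∀ z₂ ∈ sector (π / 2), T (z₁ + z₂) = (T z₁).comp (T z₂))
    {u w : ℂ} (hu : 0 < u.re) (hw : 0 < w.re) (f : E) :
    T (u + w + u) f = T u (T w (T u f)) := by
  have hwu : 0 < (w + u).re := by rw [Complex.add_re]; exact add_pos hw hu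
  rw [add_assoc, hT u (mem_sector_pi_div_two hu) _ (mem_sector_pi_div_two hwu),
    hT w (mem_sector_pi_div_two hw) u (mem_sector_pi_div_two hu)]
  rfl

lemma eLpNorm_top_apply_apply_apply_le {α 𝕜 E : Type*} [MeasurableSpace α] {μ : Measure α}
    [NontriviallyNormedField 𝕜] [NormedAddCommGroup E] [NormedSpace 𝕜 E]
    {p : ENNReal} [Fact (1 ≤ p)] {A B D : Lp E p μ →L[𝕜] Lp E p μ} {a b d : ℝ}
    (hA : ∀ f : Lp E p μ, MemLp f 1 μ → ‖A f‖ ≤ a * (eLpNorm f 1 μ).toReal)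
    (hB : ‖B‖ ≤ b) (hD : ∀ g : Lp E p μ, eLpNorm (D g) ⊤ μ ≤ ENNReal.ofReal (d * ‖g‖))
    (hd : 0 ≤ d) (f : Lp E p μ) (hf : MemLp f 1 μ) :
    eLpNorm (D (B (A f))) ⊤ μ ≤ ENNReal.ofReal (d * b * a) * eLpNorm f 1 μ := by
  have hb : 0 ≤ b := (norm_nonneg B).trans hB
  calc eLpNorm (D (B (A f))) ⊤ μ ≤ ENNReal.ofReal (d * ‖B (A f)‖) := hD _
    _ ≤ ENNReal.ofReal (d * b * a * (eLpNorm f 1 μ).toReal) := by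
        refine ENNReal.ofReal_le_ofReal ?_
        calc d * ‖B (A f)‖ ≤ d * (b * ‖A f‖) := by gcongr; exact B.le_of_opNorm_le hB _
          _ ≤ d * (b * (a * (eLpNorm f 1 μ).toReal)) := by gcongr; exact hA f hf
          _ = d * b * a * (eLpNorm f 1 μ).toReal := by ring
    _ ≤ ENNReal.ofReal (d * b * a) * eLpNorm f 1 μ := by
        rw [ENNReal.ofReal_mul' ENNReal.toReal_nonneg]
        gcongr
        exact ENNReal.ofReal_toReal_le

theorem l1_linfty_bound_on_sector_general (N : ℕ) (s : ℝ)
    (Ω : Set (EuclideanSpace ℝ (Fin N)))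
    (θ₂ θ₃ : ℝ) (hθ₂0 : 0 < θ₂) (hθ₂₃ : θ₂ < θ₃) (hθ₃ : θ₃ < Real.pi / 2)
    (T : ℂ → Lp ℂ 2 (volume.restrict Ω) →L[ℂ] Lp ℂ 2 (volume.restrict Ω))
    (hTsg : ∀ z₁ ∈ {z : ℂ | z ≠ 0 ∧ |z.arg| < Real.pi / 2},
      ∀ z₂ ∈ {z : ℂ | z ≠ 0 ∧ |z.arg| < Real.pi / 2},
        T (z₁ + z₂) = (T z₁).comp (T z₂))
    (C : ℝ) (hC : 0 < C)
    (hL2 : ∀ z ∈ {z : ℂ | z ≠ 0 ∧ |z.arg| < θ₃}, ‖T z‖ ≤ C)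
    (hL1L2 : ∀ t : ℝ, 0 < t → ∀ f : Lp ℂ 2 (volume.restrict Ω),
      MemLp (⇑f) 1 (volume.restrict Ω) →
        ‖T (t : ℂ) f‖ ≤ C * t ^ (-((N : ℝ) / (4 * s))) *
          (eLpNorm (⇑f) 1 (volume.restrict Ω)).toReal)
    (hL2Linf : ∀ t : ℝ, 0 < t → ∀ f : Lp ℂ 2 (volume.restrict Ω),
      eLpNorm (⇑(T (t : ℂ) f)) ⊤ (volume.restrict Ω) ≤
        ENNReal.ofReal (C * t ^ (-((N : ℝ) / (4 * s))) * ‖f‖)) :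
    ∃ C' : ℝ, 0 < C' ∧ ∀ z ∈ {z : ℂ | z ≠ 0 ∧ |z.arg| < θ₂},
      ∀ f : Lp ℂ 2 (volume.restrict Ω), MemLp (⇑f) 1 (volume.restrict Ω) →
        eLpNorm (⇑(T z f)) ⊤ (volume.restrict Ω) ≤
          ENNReal.ofReal (C' * z.re ^ (-((N : ℝ) / (2 * s)))) *
            eLpNorm (⇑f) 1 (volume.restrict Ω) := by
  set δ := tan θ₂ / tan θ₃
  have hδ : δ < 1 := (div_lt_one (tan_pos_of_pos_of_lt_pi_div_two (hθ₂0.trans hθ₂₃) hθ₃)).2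
    (tan_lt_tan_of_nonneg_of_lt_pi_div_two hθ₂0.le hθ₃ hθ₂₃)
  set c := (1 - δ) / 2
  have hc : 0 < c := by simp only [c]; linarith
  refine ⟨C ^ 3 * c ^ (-((N : ℝ) / (2 * s))), by positivity, fun z hz f hf => ?_⟩
  have hre : 0 < z.re := re_pos_of_mem_sector (hθ₂₃.trans hθ₃).le hz
  set u : ℝ := c * z.re with hu_def
  have hu : 0 < u := mul_pos hc hre
  set w : ℂ := z - ((1 - δ) * z.re : ℝ)
  have hw : w ∈ sector θ₃ := sub_ofReal_mem_sector hθ₂0 hθ₂₃ hθ₃ hz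
  have hz_eq : z = u + w + u := by simp only [u, w, c]; push_cast; ring
  have hu_sq : u ^ (-((N : ℝ) / (4 * s))) * u ^ (-((N : ℝ) / (4 * s))) =
      c ^ (-((N : ℝ) / (2 * s))) * z.re ^ (-((N : ℝ) / (2 * s))) := by
    rw [← rpow_add hu, hu_def, ← mul_rpow hc.le hre.le]
    ring_nf
  have hsplit : T z f = T u (T w (T u f)) := by
    rw [hz_eq]
    exact apply_add_add_eq T hTsg (by simpa using hu) (re_pos_of_mem_sector hθ₃.le hw) f
  rw [hsplit]
  refine (eLpNorm_top_apply_apply_apply_le (hL1L2 u hu) (hL2 w hw) (hL2Linf u hu)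
    (by positivity) f hf).trans_eq ?_
  congr 2
  linear_combination C ^ 3 * hu_sq

/-- Composition/decomposition argument: if a semigroup `T` on the sector `Σ(π/2)` over
`L²(Ω)` is uniformly bounded on `L²` in a sector `Σ(θ₃)` and satisfies the real-time bounds
`‖T(t)‖_{L¹→L²} ≤ C t^{-N/(4s)}` and `‖T(t)‖_{L²→L^∞} ≤ C t^{-N/(4s)}`, then on any smaller
sector `Σ(θ₂)` with `θ₂ < θ₃` one has `‖T(z)‖_{L¹→L^∞} ≤ C' (Re z)^{-N/(2s)}`. -/
theorem l1_linfty_bound_on_sector (N : ℕ) (hN : 1 ≤ N) (s : ℝ)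
    (hs0 : 0 < s) (hs1 : s < 1)
    (Ω : Set (EuclideanSpace ℝ (Fin N))) (hΩ : MeasurableSet Ω)
    (θ₂ θ₃ : ℝ) (hθ₂0 : 0 < θ₂) (hθ₂₃ : θ₂ < θ₃) (hθ₃ : θ₃ < Real.pi / 2)
    (T : ℂ → Lp ℂ 2 (volume.restrict Ω) →L[ℂ] Lp ℂ 2 (volume.restrict Ω))
    (hTsg : ∀ z₁ ∈ {z : ℂ | z ≠ 0 ∧ |z.arg| < Real.pi / 2},
      ∀ z₂ ∈ {z : ℂ | z ≠ 0 ∧ |z.arg| < Real.pi / 2},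
        T (z₁ + z₂) = (T z₁).comp (T z₂))
    (C : ℝ) (hC : 0 < C)
    (hL2 : ∀ z ∈ {z : ℂ | z ≠ 0 ∧ |z.arg| < θ₃}, ‖T z‖ ≤ C)
    (hL1L2 : ∀ t : ℝ, 0 < t → ∀ f : Lp ℂ 2 (volume.restrict Ω),
      MemLp (⇑f) 1 (volume.restrict Ω) →
        ‖T (t : ℂ) f‖ ≤ C * t ^ (-((N : ℝ) / (4 * s))) *
          (eLpNorm (⇑f) 1 (volume.restrict Ω)).toReal)
    (hL2Linf : ∀ t : ℝ, 0 < t → ∀ f : Lp ℂ 2 (volume.restrict Ω),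
      eLpNorm (⇑(T (t : ℂ) f)) ⊤ (volume.restrict Ω) ≤
        ENNReal.ofReal (C * t ^ (-((N : ℝ) / (4 * s))) * ‖f‖)) :
    ∃ C' : ℝ, 0 < C' ∧ ∀ z ∈ {z : ℂ | z ≠ 0 ∧ |z.arg| < θ₂},
      ∀ f : Lp ℂ 2 (volume.restrict Ω), MemLp (⇑f) 1 (volume.restrict Ω) →
        eLpNorm (⇑(T z f)) ⊤ (volume.restrict Ω) ≤
          ENNReal.ofReal (C' * z.re ^ (-((N : ℝ) / (2 * s)))) *
            eLpNorm (⇑f) 1 (volume.restrict Ω) :=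
  l1_linfty_bound_on_sector_general N s Ω θ₂ θ₃ hθ₂0 hθ₂₃ hθ₃ T hTsg C hC hL2 hL1L2 hL2Linf
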